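/- Let P ⊆ 𝒫 be finite, k ≥ 1, and δ ∈ D^P_k(T_nD) (i.e., δ is satisfiable in some reflexive Kripke model). Then for every l ∈ {1,…,k} and every nonempty B ⊆ 𝒜: δ^{↓l} ∈ R_B(δ^{↓(l−1)}) and δ^{↑(l−1)} ∈ R_B(δ^{↑l}). -/

import Mathlib

/-!
Common framework: multi-agent epistemic modal logic with distributed knowledge.
Agents are `Fin n`, atoms are natural numbers.
-/

namespace DKLogic

/-- Formulas of the language `L_D`: atoms, negation, conjunction, disjunction and the
distributed-knowledge modality `D_B` for nonempty sets `B` of agents (together with the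
constants `⊤`/`⊥`, which the paper uses as the empty conjunction/disjunction). -/
inductive Formula (n : ℕ) : Type
  | top : Formula n
  | bot : Formula n
  | atom : ℕ → Formula n
  | neg : Formula n → Formula n
  | and : Formula n → Formula n → Formula n
  | or : Formula n → Formula n → Formula n
  | D : {B : Finset (Fin n) // B.Nonempty} → Formula n → Formula n

namespace Formula

/-- Modal depth of a formula. -/
def depth {n : ℕ} : Formula n → ℕ
  | top => 0
  | bot => 0
  | atom _ => 0
  | neg φ => depth φ
  | and φ ψ => max (depth φ) (depth ψ)
  | or φ ψ => max (depth φ) (depth ψ)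
  | D _ φ => depth φ + 1

/-- The atoms occurring in a formula. -/
def atoms {n : ℕ} : Formula n → Finset ℕ
  | top => ∅
  | bot => ∅
  | atom q => {q}
  | neg φ => atoms φ
  | and φ ψ => atoms φ ∪ atoms ψ
  | or φ ψ => atoms φ ∪ atoms ψ
  | D _ φ => atoms φ

end Formula

/-- A Kripke model over world type `W` with `n` agents. -/
structure KModel (n : ℕ) (W : Type) where
  R : Fin n → W → W → Prop
  V : W → Set ℕ

/-- The distributed accessibility relation `R_B = ⋂_{i ∈ B} R_i`. -/
def KModel.RB {n : ℕ} {W : Type} (M : KModel n W) (B : Finset (Fin n)) (s t : W) : Prop :=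
  ∀ i ∈ B, M.R i s t

/-- Satisfaction. -/
def Sat {n : ℕ} {W : Type} (M : KModel n W) : W → Formula n → Prop
  | _, .top => True
  | _, .bot => False
  | s, .atom q => q ∈ M.V s
  | s, .neg φ => ¬ Sat M s φ
  | s, .and φ ψ => Sat M s φ ∧ Sat M s ψ
  | s, .or φ ψ => Sat M s φ ∨ Sat M s ψ
  | s, .D B φ => ∀ t : W, M.RB B.1 s t → Sat M t φ

/-- Seriality of a relation. -/
def Serial {W : Type} (R : W → W → Prop) : Prop := ∀ x, ∃ y, R x y

/-- Euclideanness of a relation. -/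
def Euclidean {W : Type} (R : W → W → Prop) : Prop := ∀ x y z, R x y → R x z → R y z

/-- The six modal systems. -/
inductive MSys : Type
  | K | D | T | K45 | KD45 | S5

/-- `L`-models: frame conditions on each accessibility relation for each system. -/
def IsModel {n : ℕ} {W : Type} : MSys → KModel n W → Prop
  | .K, _ => True
  | .D, M => ∀ i, Serial (M.R i)
  | .T, M => ∀ i, Reflexive (M.R i)
  | .K45, M => ∀ i, Transitive (M.R i) ∧ Euclidean (M.R i)
  | .KD45, M => ∀ i, Serial (M.R i) ∧ Transitive (M.R i) ∧ Euclidean (M.R i)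
  | .S5, M => ∀ i, Reflexive (M.R i) ∧ Transitive (M.R i) ∧ Euclidean (M.R i)

/-- Semantic consequence over `L`-models. -/
def Entails {n : ℕ} (L : MSys) (φ ψ : Formula n) : Prop :=
  ∀ (W : Type) (M : KModel n W), IsModel L M → ∀ s : W, Sat M s φ → Sat M s ψ

/-- Semantic equivalence over `L`-models. -/
def EquivL {n : ℕ} (L : MSys) (φ ψ : Formula n) : Prop :=
  Entails L φ ψ ∧ Entails L ψ φ

/-- `L`-satisfiability. -/
def SatL {n : ℕ} (L : MSys) (φ : Formula n) : Prop :=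
  ∃ (W : Type) (M : KModel n W) (s : W), IsModel L M ∧ Sat M s φ

/-- Collective `p`-bisimulation between two pointed models. -/
def CollPBisim {n : ℕ} {W W' : Type} (M : KModel n W) (s : W) (M' : KModel n W') (s' : W')
    (p : ℕ) : Prop :=
  ∃ ρ : W → W' → Prop, ρ s s' ∧
    ∀ u u', ρ u u' →
      ((∀ q : ℕ, q ≠ p → (q ∈ M.V u ↔ q ∈ M'.V u')) ∧
       (∀ B : Finset (Fin n), B.Nonempty → ∀ v, M.RB B u v → ∃ v', M'.RB B u' v' ∧ ρ v v') ∧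
       (∀ B : Finset (Fin n), B.Nonempty → ∀ v', M'.RB B u' v' → ∃ v, M.RB B u v ∧ ρ v v'))

/-- `ψ` is a result of forgetting `p` in `φ` in system `L`
(written `dforget_L(φ,p) ≡_L ψ` in the paper). -/
def IsForget {n : ℕ} (L : MSys) (φ : Formula n) (p : ℕ) (ψ : Formula n) : Prop :=
  ψ.atoms ⊆ φ.atoms.erase p ∧
  (∀ (W W' : Type) (M : KModel n W) (M' : KModel n W') (s : W) (s' : W'),
      IsModel L M → IsModel L M' → Sat M s φ → CollPBisim M s M' s' p → Sat M' s' ψ) ∧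
  (∀ (W' : Type) (M' : KModel n W') (s' : W'),
      IsModel L M' → Sat M' s' ψ →
      ∃ (W : Type) (M : KModel n W) (s : W), IsModel L M ∧ Sat M s φ ∧ CollPBisim M s M' s' p)

/-- `L` is closed under forgetting: `dforget_L(φ,p)` exists (as an `L`-satisfiable formula)
for every `L`-satisfiable `φ` and every atom `p`. -/
def ClosedUnderForgetting {n : ℕ} (L : MSys) : Prop :=
  ∀ (φ : Formula n) (p : ℕ), SatL L φ → ∃ ψ : Formula n, SatL L ψ ∧ IsForget L φ p ψ

/-- `ψ` is a uniform interpolant of `φ` in `L` over `P \ {p}`. -/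
def IsUI {n : ℕ} (L : MSys) (P : Finset ℕ) (p : ℕ) (φ ψ : Formula n) : Prop :=
  SatL L ψ ∧ ψ.atoms ⊆ P.erase p ∧
  ∀ χ : Formula n, p ∉ χ.atoms → (Entails L φ χ ↔ Entails L ψ χ)

/-- The uniform interpolation property for the system `L`. -/
def HasUIP {n : ℕ} (L : MSys) : Prop :=
  ∀ (P : Finset ℕ) (p : ℕ) (φ : Formula n),
    p ∈ P → φ.atoms ⊆ P → SatL L φ → ∃ ψ : Formula n, IsUI L P p φ ψ

/-! ### Canonical formulas -/

/-- Big conjunction of a list of formulas (`⊤` for the empty list). -/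
def bigAnd {n : ℕ} : List (Formula n) → Formula n
  | [] => .top
  | φ :: l => .and φ (bigAnd l)

/-- Big disjunction of a list of formulas (`⊥` for the empty list). -/
def bigOr {n : ℕ} : List (Formula n) → Formula n
  | [] => .bot
  | φ :: l => .or φ (bigOr l)

/-- An injective numerical code of formulas, used to fix a canonical ordering. -/
def fcode {n : ℕ} : Formula n → ℕ
  | .top => Nat.pair 0 0
  | .bot => Nat.pair 1 0
  | .atom q => Nat.pair 2 q
  | .neg φ => Nat.pair 3 (fcode φ)
  | .and φ ψ => Nat.pair 4 (Nat.pair (fcode φ) (fcode ψ))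
  | .or φ ψ => Nat.pair 5 (Nat.pair (fcode φ) (fcode ψ))
  | .D B φ => Nat.pair 6 (Nat.pair (B.1.sum fun i => 2 ^ (i : ℕ)) (fcode φ))

/-- Insert a formula into a strictly `fcode`-sorted list (dropping duplicates). -/
def insertF {n : ℕ} (φ : Formula n) : List (Formula n) → List (Formula n)
  | [] => [φ]
  | ψ :: l =>
      if fcode φ < fcode ψ then φ :: ψ :: l
      else if fcode φ = fcode ψ then ψ :: l
      else ψ :: insertF φ l

/-- The canonical (sorted, duplicate-free) list representing the set of formulas in `l`. -/
def normList {n : ℕ} (l : List (Formula n)) : List (Formula n) := l.foldr insertF []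

/-- The minterm of `P` that is positive exactly on `S`. -/
def minterm {n : ℕ} (P S : Finset ℕ) : Formula n :=
  bigAnd ((P.sort (· ≤ ·)).map fun q =>
    if q ∈ S then Formula.atom q else Formula.neg (Formula.atom q))

/-- The subset of `Fin n` whose characteristic bits are those of `m`. -/
def natToFinset (n m : ℕ) : Finset (Fin n) :=
  Finset.univ.filter fun i => m.testBit (i : ℕ)

/-- A canonical enumeration of all nonempty subsets of the agent set. -/
def neSubsets (n : ℕ) : List {B : Finset (Fin n) // B.Nonempty} :=
  ((List.range (2 ^ n)).map (natToFinset n)).filterMap fun B =>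
    if h : B.Nonempty then some ⟨B, h⟩ else none

/-- `∇_B Φ = D_B (⋁Φ) ∧ ⋀_{φ ∈ Φ} ¬ D_B ¬ φ`. -/
def nabla {n : ℕ} (B : {B : Finset (Fin n) // B.Nonempty}) (Φ : List (Formula n)) : Formula n :=
  Formula.and (Formula.D B (bigOr Φ))
    (bigAnd (Φ.map fun φ => Formula.neg (Formula.D B (Formula.neg φ))))

/-- Underlying data of a d-canonical formula: a set of (positive) atoms together with,
for every set `B` of agents, a list of successor data. -/
inductive CData (n : ℕ) : Type
  | mk (S : Finset ℕ) (succ : Finset (Fin n) → List (CData n)) : CData n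

/-- The positive-atom component. -/
def CData.S {n : ℕ} : CData n → Finset ℕ
  | mk S _ => S

/-- The `B`-successor data. -/
def CData.succ {n : ℕ} : CData n → Finset (Fin n) → List (CData n)
  | mk _ f => f

/-- The d-canonical formula of depth `k` over `P` determined by the data `d`:
`δ_0 ∧ ⋀_{B} ∇_B Φ_B`. -/
def toFormula {n : ℕ} (P : Finset ℕ) : ℕ → CData n → Formula n
  | 0, d => minterm P (d.S ∩ P)
  | (k+1), d =>
      Formula.and (minterm P (d.S ∩ P))
        (bigAnd ((neSubsets n).map fun B =>
          nabla B (normList ((d.succ B.1).map fun c => toFormula P k c))))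

/-- `D^P_k`: the set of d-canonical formulas of depth `k` over `P`. -/
def DP {n : ℕ} (P : Finset ℕ) (k : ℕ) : Set (Formula n) := Set.range (toFormula P k)

/-- `R_B(δ)` for `δ` the level-`k` canonical formula with data `d`:
the set of `B`-successor canonical formulas (of level `k - 1`). -/
def RBset {n : ℕ} (P : Finset ℕ) (k : ℕ) (d : CData n) (B : Finset (Fin n)) :
    Set (Formula n) :=
  {φ | ∃ c ∈ d.succ B, φ = toFormula P (k - 1) c}

/-- One pruning step `δ ↦ δ^↓` on data (first argument: the level of the input). -/
def downD {n : ℕ} : ℕ → CData n → CData n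
  | 0, d => d
  | 1, d => CData.mk d.S (fun _ => [])
  | (k+2), d => CData.mk d.S (fun B => (d.succ B).map fun c => downD (k+1) c)

/-- `l`-fold pruning `δ ↦ δ^{↓l}` on data (first argument: the level of the input). -/
def downIter {n : ℕ} : ℕ → ℕ → CData n → CData n
  | _, 0, d => d
  | k, (l+1), d => downIter (k-1) l (downD k d)

/-- Truncation `δ ↦ δ^{↑l}` on data (first argument: the level of the input). -/
def upD {n : ℕ} : ℕ → ℕ → CData n → CData n
  | _, 0, d => CData.mk d.S (fun _ => [])
  | 0, (_+1), d => d
  | (k+1), (l+1), d => CData.mk d.S (fun B => (d.succ B).map fun c => upD k l c)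

/-- The canonical formula `δ` of level `k` with data `d`. -/
def cf {n : ℕ} (P : Finset ℕ) (k : ℕ) (d : CData n) : Formula n := toFormula P k d

/-- `δ^{↓l}` (a canonical formula of level `k - l`). -/
def cfDown {n : ℕ} (P : Finset ℕ) (k l : ℕ) (d : CData n) : Formula n :=
  toFormula P (k - l) (downIter k l d)

/-- `δ^{↑l}` (a canonical formula of level `min k l`). -/
def cfUp {n : ℕ} (P : Finset ℕ) (k l : ℕ) (d : CData n) : Formula n :=
  toFormula P (min k l) (upD k l d)

/-- Literal elimination: `φ^p` replaces every occurrence of `¬p` by `⊤` and subsequently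
every remaining occurrence of `p` by `⊤`. -/
def elim {n : ℕ} (p : ℕ) : Formula n → Formula n
  | .top => .top
  | .bot => .bot
  | .atom q => if q = p then .top else .atom q
  | .neg (.atom q) => if q = p then .top else .neg (.atom q)
  | .neg φ => .neg (elim p φ)
  | .and φ ψ => .and (elim p φ) (elim p ψ)
  | .or φ ψ => .or (elim p φ) (elim p ψ)
  | .D B φ => .D B (elim p φ)

/-!
In a reflexive model a world `s` satisfying `δ` is its own `R_B`-successor, so the box half of
`∇_B R_B(δ)` makes some member of `R_B(δ)` true at `s`. Pruning and truncation preserve truth at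
`s`, and two canonical formulas of the same depth that are true at the same world are equal:
their minterms agree, and inductively so do their successor sets. Hence `δ^{↓l}` (resp.
`δ^{↑(l-1)}`), being true at `s`, is that member of `R_B(δ^{↓(l-1)})` (resp. `R_B(δ^{↑l})`).
-/

variable {n : ℕ}

lemma sum_two_pow_val_eq (B : Finset (Fin n)) :
    ∑ i ∈ B, 2 ^ (i : ℕ) = ∑ j ∈ B.image Fin.val, 2 ^ j :=
  (Finset.sum_image fun _ _ _ _ h => Fin.val_injective h).symm

lemma testBit_sum_two_pow_val (B : Finset (Fin n)) (j : ℕ) :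
    (∑ i ∈ B, 2 ^ (i : ℕ)).testBit j ↔ ∃ i ∈ B, (i : ℕ) = j := by
  rw [sum_two_pow_val_eq, ← Nat.mem_bitIndices, ← List.mem_toFinset,
    Finset.toFinset_bitIndices_sum_two_pow, Finset.mem_image]

lemma natToFinset_sum_two_pow (B : Finset (Fin n)) :
    natToFinset n (∑ i ∈ B, 2 ^ (i : ℕ)) = B := by
  ext i
  simp [natToFinset, testBit_sum_two_pow_val, Fin.val_inj]

lemma mem_neSubsets {B : Finset (Fin n)} (hB : B.Nonempty) : ⟨B, hB⟩ ∈ neSubsets n := by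
  refine List.mem_filterMap.2 ⟨B, List.mem_map.2 ⟨_, ?_, natToFinset_sum_two_pow B⟩, dif_pos hB⟩
  rw [List.mem_range, sum_two_pow_val_eq]
  exact Nat.geomSum_lt le_rfl (by simp)

lemma fcode_injective : Function.Injective (fcode (n := n)) := by
  intro φ ψ h
  induction φ generalizing ψ with
  | top | bot | atom => cases ψ <;> simp_all [fcode, Nat.pair_eq_pair]
  | neg φ ih => cases ψ <;> simp [fcode, Nat.pair_eq_pair] at h; exact congrArg _ (ih h)
  | and φ₁ φ₂ ih₁ ih₂ | or φ₁ φ₂ ih₁ ih₂ =>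
    cases ψ <;> simp [fcode, Nat.pair_eq_pair] at h
    rw [ih₁ h.1, ih₂ h.2]
  | D B φ ih =>
    cases ψ with
    | D C ψ =>
      simp only [fcode, Nat.pair_eq_pair, true_and] at h
      have hBC : B.1 = C.1 := by
        simpa [natToFinset_sum_two_pow] using congrArg (natToFinset n) h.1
      rw [Subtype.ext hBC, ih h.2]
    | _ => simp [fcode, Nat.pair_eq_pair] at h

lemma mem_insertF {φ x : Formula n} {l : List (Formula n)} :
    x ∈ insertF φ l ↔ x = φ ∨ x ∈ l := by
  induction l with
  | nil => simp [insertF]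
  | cons ψ l ih =>
    unfold insertF
    split_ifs with hlt heq
    · simp
    · simp [fcode_injective heq]
    · simp only [List.mem_cons, ih]
      tauto

lemma pairwise_insertF {φ : Formula n} {l : List (Formula n)}
    (hl : l.Pairwise fun a b => fcode a < fcode b) :
    (insertF φ l).Pairwise fun a b => fcode a < fcode b := by
  induction l with
  | nil => simp [insertF]
  | cons ψ l ih =>
    rw [List.pairwise_cons] at hl
    unfold insertF
    split_ifs with hlt heq
    · refine List.pairwise_cons.2 ⟨?_, List.pairwise_cons.2 hl⟩
      rintro b (_ | ⟨_, hb⟩)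
      exacts [hlt, hlt.trans (hl.1 b hb)]
    · exact List.pairwise_cons.2 hl
    · refine List.pairwise_cons.2 ⟨fun b hb => ?_, ih hl.2⟩
      rcases mem_insertF.1 hb with rfl | hb
      exacts [by omega, hl.1 b hb]

lemma pairwise_normList (l : List (Formula n)) :
    (normList l).Pairwise fun a b => fcode a < fcode b := by
  induction l with
  | nil => simp [normList]
  | cons φ l ih => exact pairwise_insertF ih

lemma mem_normList {x : Formula n} {l : List (Formula n)} : x ∈ normList l ↔ x ∈ l := by
  induction l with
  | nil => simp [normList]
  | cons φ l ih => exact mem_insertF.trans (by rw [← normList, ih, List.mem_cons])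

lemma normList_eq_of_mem_iff {l l' : List (Formula n)} (h : ∀ x, x ∈ l ↔ x ∈ l') :
    normList l = normList l' := by
  have hinj : Function.Injective (List.map (fcode (n := n))) :=
    List.map_injective_iff.2 fcode_injective
  refine hinj (List.Pairwise.eq_of_mem_iff (r := (· < ·)) ?_ ?_ fun a => ?_)
  · exact List.pairwise_map.2 (pairwise_normList l)
  · exact List.pairwise_map.2 (pairwise_normList l')
  · simp [mem_normList, h]

section Semantics

variable {W : Type} {M : KModel n W}

lemma sat_bigAnd {s : W} {l : List (Formula n)} :
    Sat M s (bigAnd l) ↔ ∀ φ ∈ l, Sat M s φ := by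
  induction l with
  | nil => simp [bigAnd, Sat]
  | cons φ l ih => simp [bigAnd, Sat, ih]

lemma sat_bigOr {s : W} {l : List (Formula n)} :
    Sat M s (bigOr l) ↔ ∃ φ ∈ l, Sat M s φ := by
  induction l with
  | nil => simp [bigOr, Sat]
  | cons φ l ih => simp [bigOr, Sat, ih]

lemma sat_minterm {s : W} {P S : Finset ℕ} :
    Sat M s (minterm (n := n) P S) ↔ ∀ q ∈ P, (q ∈ S ↔ q ∈ M.V s) := by
  simp only [minterm, sat_bigAnd, List.forall_mem_map, Finset.mem_sort]
  refine forall₂_congr fun q _ => ?_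
  split_ifs with hq <;> simp [Sat, hq]

lemma eq_of_sat_minterm {s : W} {P S S' : Finset ℕ} (hS : S ⊆ P) (hS' : S' ⊆ P)
    (h : Sat M s (minterm P S)) (h' : Sat M s (minterm P S')) : S = S' := by
  ext q
  by_cases hq : q ∈ P
  · rw [sat_minterm.1 h q hq, sat_minterm.1 h' q hq]
  · exact iff_of_false (fun h => hq (hS h)) (fun h => hq (hS' h))

lemma sat_nabla {s : W} {B : {B : Finset (Fin n) // B.Nonempty}} {Φ : List (Formula n)} :
    Sat M s (nabla B Φ) ↔
      (∀ t, M.RB B.1 s t → ∃ φ ∈ Φ, Sat M t φ) ∧ ∀ φ ∈ Φ, ∃ t, M.RB B.1 s t ∧ Sat M t φ := by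
  simp [nabla, Sat, sat_bigAnd, sat_bigOr]

lemma sat_toFormula_succ_iff {s : W} {P : Finset ℕ} {j : ℕ} {c : CData n} :
    Sat M s (toFormula P (j + 1) c) ↔ Sat M s (minterm P (c.S ∩ P)) ∧
      ∀ B : Finset (Fin n), B.Nonempty →
        (∀ t, M.RB B s t → ∃ c₀ ∈ c.succ B, Sat M t (toFormula P j c₀)) ∧
        ∀ c₀ ∈ c.succ B, ∃ t, M.RB B s t ∧ Sat M t (toFormula P j c₀) := by
  simp only [toFormula, Sat, sat_bigAnd, List.forall_mem_map, sat_nabla, mem_normList]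
  simp only [List.mem_map, exists_exists_and_eq_and]
  refine and_congr_right fun _ => ⟨fun h B hB => h ⟨B, hB⟩ (mem_neSubsets hB), ?_⟩
  exact fun h B _ => h B.1 B.2

end Semantics

section Canonical

variable {W : Type} {M : KModel n W} {P : Finset ℕ}

lemma mem_map_toFormula_iff_of_sat {j : ℕ}
    (huniq : ∀ t c₀ c₁, Sat M t (toFormula P j c₀) → Sat M t (toFormula P j c₁) →
      toFormula P j c₀ = toFormula P j c₁)
    {s : W} {c : CData n} (hc : Sat M s (toFormula P (j + 1) c))
    {B : Finset (Fin n)} (hB : B.Nonempty) {c₀ : CData n} :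
    toFormula P j c₀ ∈ (c.succ B).map (toFormula P j) ↔
      ∃ t, M.RB B s t ∧ Sat M t (toFormula P j c₀) := by
  obtain ⟨hbox, hdiamond⟩ := (sat_toFormula_succ_iff.1 hc).2 B hB
  refine ⟨fun h => ?_, fun ⟨t, hst, ht⟩ => ?_⟩
  · obtain ⟨c₁, hc₁, heq⟩ := List.mem_map.1 h
    exact heq ▸ hdiamond c₁ hc₁
  · obtain ⟨c₁, hc₁, ht₁⟩ := hbox t hst
    exact huniq t c₀ c₁ ht ht₁ ▸ List.mem_map_of_mem hc₁

lemma toFormula_eq_of_sat : ∀ {j : ℕ} {s : W} {c c' : CData n},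
    Sat M s (toFormula P j c) → Sat M s (toFormula P j c') → toFormula P j c = toFormula P j c'
  | 0, _, _, _, h, h' => by
    rw [toFormula, toFormula,
      eq_of_sat_minterm Finset.inter_subset_right Finset.inter_subset_right h h']
  | j + 1, _, c, c', h, h' => by
    have hS := eq_of_sat_minterm Finset.inter_subset_right Finset.inter_subset_right
      (sat_toFormula_succ_iff.1 h).1 (sat_toFormula_succ_iff.1 h').1
    simp only [toFormula, hS]
    refine congrArg _ (congrArg _ (List.map_congr_left fun B _ => ?_))
    have hiff (c₀ : CData n) := (mem_map_toFormula_iff_of_sat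
      (fun _ _ _ => toFormula_eq_of_sat) h B.2 (c₀ := c₀)).trans
      (mem_map_toFormula_iff_of_sat (fun _ _ _ => toFormula_eq_of_sat) h' B.2).symm
    refine congrArg _ (normList_eq_of_mem_iff fun φ => ⟨fun hφ => ?_, fun hφ => ?_⟩) <;>
      obtain ⟨c₀, -, rfl⟩ := List.mem_map.1 hφ
    exacts [(hiff c₀).1 hφ, (hiff c₀).2 hφ]

lemma toFormula_mem_RBset_of_RB_self {s : W} {B : Finset (Fin n)} (hB : B.Nonempty)
    (hss : M.RB B s s) {j : ℕ} {c c' : CData n} (hc : Sat M s (toFormula P (j + 1) c))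
    (hc' : Sat M s (toFormula P j c')) : toFormula P j c' ∈ RBset P (j + 1) c B := by
  obtain ⟨c₀, hc₀, heq⟩ := List.mem_map.1 <|
    (mem_map_toFormula_iff_of_sat (fun _ _ _ => toFormula_eq_of_sat) hc hB).2 ⟨s, hss, hc'⟩
  exact ⟨c₀, hc₀, heq.symm⟩

lemma sat_toFormula_succ_of_map {j j' : ℕ} {g : CData n → CData n}
    (hg : ∀ t c₀, Sat M t (toFormula P j c₀) → Sat M t (toFormula P j' (g c₀)))
    {s : W} {c : CData n} (h : Sat M s (toFormula P (j + 1) c)) :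
    Sat M s (toFormula P (j' + 1) (.mk c.S fun B => (c.succ B).map g)) := by
  obtain ⟨hS, hsucc⟩ := sat_toFormula_succ_iff.1 h
  refine sat_toFormula_succ_iff.2 ⟨hS, fun B hB => ⟨fun t hst => ?_, fun c₀ hc₀ => ?_⟩⟩
  · obtain ⟨c₀, hc₀, ht⟩ := (hsucc B hB).1 t hst
    exact ⟨g c₀, List.mem_map_of_mem hc₀, hg t c₀ ht⟩
  · obtain ⟨c₁, hc₁, rfl⟩ := List.mem_map.1 hc₀
    obtain ⟨t, hst, ht⟩ := (hsucc B hB).2 c₁ hc₁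
    exact ⟨t, hst, hg t c₁ ht⟩

lemma sat_toFormula_downD : ∀ {j : ℕ} {s : W} {c : CData n},
    Sat M s (toFormula P j c) → Sat M s (toFormula P (j - 1) (downD j c))
  | 0, _, _, h => h
  | 1, _, _, h => (sat_toFormula_succ_iff.1 h).1
  | _ + 2, _, _, h => sat_toFormula_succ_of_map (fun _ _ => sat_toFormula_downD) h

lemma sat_toFormula_downIter {s : W} : ∀ {k l : ℕ} {c : CData n},
    Sat M s (toFormula P k c) → Sat M s (toFormula P (k - l) (downIter k l c))
  | _, 0, _, h => h
  | k, l + 1, _, h => by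
    rw [show k - (l + 1) = k - 1 - l by omega]
    exact sat_toFormula_downIter (sat_toFormula_downD h)

lemma sat_toFormula_upD : ∀ {j m : ℕ} {s : W} {c : CData n},
    Sat M s (toFormula P j c) → Sat M s (toFormula P (min j m) (upD j m c))
  | 0, 0, _, _, h => h
  | _ + 1, 0, _, _, h => (sat_toFormula_succ_iff.1 h).1
  | 0, _ + 1, _, _, h => h
  | _ + 1, _ + 1, _, _, h => by
    rw [Nat.succ_min_succ]
    exact sat_toFormula_succ_of_map (fun _ _ => sat_toFormula_upD) h

end Canonical

theorem reflexive_successors_general {n : ℕ} (P : Finset ℕ) (k : ℕ)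
    (d : CData n) (hsat : SatL MSys.T (cf P k d))
    (l : ℕ) (hl1 : 1 ≤ l) (hlk : l ≤ k)
    (B : Finset (Fin n)) (hB : B.Nonempty) :
    cfDown P k l d ∈ RBset P (k - (l - 1)) (downIter k (l - 1) d) B ∧
    cfUp P k (l - 1) d ∈ RBset P l (upD k l d) B := by
  obtain ⟨W, M, s, hrefl, hs⟩ := hsat
  have hss : M.RB B s s := fun i _ => hrefl i s
  obtain ⟨l, rfl⟩ : ∃ l', l = l' + 1 := ⟨l - 1, by omega⟩
  rw [Nat.add_sub_cancel]
  constructor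
  · have hprev := sat_toFormula_downIter (l := l) hs
    rw [show k - l = k - (l + 1) + 1 by omega] at hprev ⊢
    exact toFormula_mem_RBset_of_RB_self hB hss hprev (sat_toFormula_downIter hs)
  · have hup := sat_toFormula_upD (m := l + 1) hs
    have hup' := sat_toFormula_upD (m := l) hs
    rw [min_eq_right hlk] at hup
    rw [min_eq_right (by omega)] at hup'
    rw [cfUp, min_eq_right (by omega)]
    exact toFormula_mem_RBset_of_RB_self hB hss hup hup'

/-- reflexivity lemma: for `T_n D`-satisfiable canonical formulas,
`δ^{↓l} ∈ R_B(δ^{↓(l−1)})` and `δ^{↑(l−1)} ∈ R_B(δ^{↑l})`. -/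
theorem reflexive_successors {n : ℕ} (P : Finset ℕ) (k : ℕ) (hk : 1 ≤ k)
    (d : CData n) (hsat : SatL MSys.T (cf P k d))
    (l : ℕ) (hl1 : 1 ≤ l) (hlk : l ≤ k)
    (B : Finset (Fin n)) (hB : B.Nonempty) :
    cfDown P k l d ∈ RBset P (k - (l - 1)) (downIter k (l - 1) d) B ∧
    cfUp P k (l - 1) d ∈ RBset P l (upD k l d) B :=
  reflexive_successors_general P k d hsat l hl1 hlk B hB

end DKLogic
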